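/- Given n×n matrices X and Y, there exist unitary matrices V and W such that |X + Y| ≤ V |X| V* + W |Y| W* in the Löwner order. -/

import Mathlib

open Matrix
open scoped ComplexOrder

noncomputable section

/-- The square root of a positive semidefinite matrix, as defined in the older Mathlib -/
noncomputable def Matrix.PosSemidef.sqrt {n 𝕜 : Type*} [Fintype n] [DecidableEq n] [RCLike 𝕜]
    {A : Matrix n n 𝕜} (hA : A.PosSemidef) : Matrix n n 𝕜 :=
  hA.1.eigenvectorUnitary.1 * diagonal ((↑) ∘ (√·) ∘ hA.1.eigenvalues) *
  (star hA.1.eigenvectorUnitary : Matrix n n 𝕜)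

theorem Matrix.PosSemidef.isHermitian_sqrt {n 𝕜 : Type*} [Fintype n] [DecidableEq n] [RCLike 𝕜]
    {A : Matrix n n 𝕜} (hA : A.PosSemidef) : hA.sqrt.IsHermitian := by
  unfold Matrix.PosSemidef.sqrt IsHermitian
  simp [conjTranspose_mul, Matrix.mul_assoc, diagonal_conjTranspose, Function.comp_def,
    star_eq_conjTranspose, Pi.star_def, RCLike.star_def, RCLike.conj_ofReal]

/-- n×n complex matrices -/
abbrev Mat (n : ℕ) := Matrix (Fin n) (Fin n) ℂ

/-- modulus |A| = sqrt (Aᴴ A) -/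
noncomputable def matAbs {n : ℕ} (A : Mat n) : Mat n :=
  (Matrix.posSemidef_conjTranspose_mul_self A).sqrt

/-- spectral (operator) norm -/
noncomputable def specNorm {n : ℕ} (A : Mat n) : ℝ :=
  ‖Matrix.toEuclideanCLM (𝕜 := ℂ) (n := Fin n) A‖

/-- Löwner order: `A ≤ B` iff `B - A` is positive semidefinite -/
def loewnerLE {n : ℕ} (A B : Mat n) : Prop := (B - A).PosSemidef

/-- singular values of `A`, arranged in non-increasing order -/
noncomputable def sval {n : ℕ} (A : Mat n) : Fin n → ℝ :=
  fun i =>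
    let e := ((Matrix.posSemidef_conjTranspose_mul_self A).isHermitian_sqrt).eigenvalues
    (e ∘ Tuple.sort e) i.rev

/-- singular values indexed by naturals (0 beyond the size) -/
noncomputable def svalNat {n : ℕ} (A : Mat n) (k : ℕ) : ℝ :=
  if h : k < n then sval A ⟨k, h⟩ else 0

/-- eigenvalues of a Hermitian matrix, arranged in non-increasing order -/
noncomputable def eigsDesc {n : ℕ} {A : Mat n} (hA : A.IsHermitian) : Fin n → ℝ :=
  fun i => (hA.eigenvalues ∘ Tuple.sort hA.eigenvalues) i.rev

/-!
Polar decomposition writes `X + Y = U |X + Y|`, so `|X + Y| = Re (U* X) + Re (U* Y)`, and since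
`|U* X| = |X|` it suffices to find, for every `A`, a unitary `V` with `Re A ≤ V |A| V*`.
From `Re ⟪A x, x⟫ ≤ ‖A x‖ ‖x‖ = ‖|A| x‖ ‖x‖`, a min-max argument on a nonzero vector in the span
of the top `i + 1` eigenvectors of `Re A` and the bottom `n - i` eigenvectors of `|A|` gives
`λᵢ (Re A) ≤ λᵢ |A|` for the eigenvalues in decreasing order. The unitary `V` carrying the
eigenbasis of `|A|` onto that of `Re A` then makes `V |A| V* - Re A` diagonal with nonnegative
entries.
-/

open scoped InnerProductSpace ComplexStarModule
open Module RCLike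

theorem Module.Basis.exists_ne_zero_repr_eq_zero {K V : Type*} [Field K] [AddCommGroup V]
    [Module K V] {n : ℕ} (b₁ b₂ : Module.Basis (Fin n) K V) (i : Fin n) :
    ∃ x ≠ 0, (∀ k, i < k → b₁.repr x k = 0) ∧ ∀ k, k < i → b₂.repr x k = 0 := by
  have : FiniteDimensional K V := b₁.finiteDimensional_of_finite
  let f : V →ₗ[K] ({k // k ≠ i} → K) :=
    LinearMap.pi fun k => if i < k.1 then b₁.coord k else b₂.coord k
  have hf : finrank K ({k // k ≠ i} → K) < finrank K V := by
    rw [finrank_fintype_fun_eq_card, finrank_eq_card_basis b₁]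
    simp only [ne_eq, Fintype.card_subtype_compl, Fintype.card_unique, Fintype.card_fin]
    exact Nat.sub_one_lt_of_lt i.pos
  obtain ⟨x, hx, hx0⟩ :=
    Submodule.exists_mem_ne_zero_of_ne_bot (LinearMap.ker_ne_bot_of_finrank_lt hf)
  have hfx (k : Fin n) (hk : k ≠ i) : f x ⟨k, hk⟩ = 0 := congrFun (LinearMap.mem_ker.mp hx) _
  refine ⟨x, hx0, fun k hk => ?_, fun k hk => ?_⟩
  · simpa [f, hk] using hfx k hk.ne'
  · simpa [f, hk.not_gt] using hfx k hk.ne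

namespace LinearMap

variable {𝕜 E : Type*} [RCLike 𝕜] [NormedAddCommGroup E] [InnerProductSpace 𝕜 E]
  [FiniteDimensional 𝕜 E] {T S : E →ₗ[𝕜] E} {n : ℕ}

namespace IsSymmetric

variable (hT : T.IsSymmetric) (hn : finrank 𝕜 E = n)

lemma re_inner_apply_self_eq_sum (x : E) :
    re ⟪T x, x⟫_𝕜 = ∑ i, hT.eigenvalues hn i * ‖(hT.eigenvectorBasis hn).repr x i‖ ^ 2 := by
  rw [← (hT.eigenvectorBasis hn).repr.inner_map_map, PiLp.inner_apply, map_sum]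
  refine Finset.sum_congr rfl fun i _ => ?_
  rw [eigenvectorBasis_apply_self_apply, RCLike.inner_apply, map_mul (starRingEnd 𝕜), conj_ofReal,
    mul_left_comm, mul_conj]
  norm_cast

lemma norm_apply_sq_eq_sum (x : E) :
    ‖T x‖ ^ 2 = ∑ i, hT.eigenvalues hn i ^ 2 * ‖(hT.eigenvectorBasis hn).repr x i‖ ^ 2 := by
  rw [← (hT.eigenvectorBasis hn).repr.norm_map, EuclideanSpace.norm_sq_eq]
  simp only [eigenvectorBasis_apply_self_apply, norm_mul, norm_ofReal, mul_pow, sq_abs]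

lemma eigenvalues_mul_norm_sq_le_re_inner {x : E} {i : Fin n}
    (hx : ∀ k, i < k → (hT.eigenvectorBasis hn).repr x k = 0) :
    hT.eigenvalues hn i * ‖x‖ ^ 2 ≤ re ⟪T x, x⟫_𝕜 := by
  rw [hT.re_inner_apply_self_eq_sum hn, ← (hT.eigenvectorBasis hn).repr.norm_map,
    EuclideanSpace.norm_sq_eq, Finset.mul_sum]
  refine Finset.sum_le_sum fun k _ => ?_
  by_cases hk : i < k
  · simp [hx k hk]
  · exact mul_le_mul_of_nonneg_right (hT.eigenvalues_antitone hn (not_lt.mp hk)) (by positivity)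

end IsSymmetric

lemma IsPositive.norm_apply_le_eigenvalues_mul_norm (hT : T.IsPositive) (hn : finrank 𝕜 E = n)
    {x : E} {i : Fin n} (hx : ∀ k, k < i → (hT.isSymmetric.eigenvectorBasis hn).repr x k = 0) :
    ‖T x‖ ≤ hT.isSymmetric.eigenvalues hn i * ‖x‖ := by
  have hμ := hT.nonneg_eigenvalues hn
  rw [← pow_le_pow_iff_left₀ (norm_nonneg _) (mul_nonneg (hμ i) (norm_nonneg _)) two_ne_zero,
    hT.isSymmetric.norm_apply_sq_eq_sum hn, mul_pow,
    ← (hT.isSymmetric.eigenvectorBasis hn).repr.norm_map, EuclideanSpace.norm_sq_eq,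
    Finset.mul_sum]
  refine Finset.sum_le_sum fun k _ => ?_
  by_cases hk : k < i
  · simp [hx k hk]
  · exact mul_le_mul_of_nonneg_right (pow_le_pow_left₀ (hμ k)
      (hT.isSymmetric.eigenvalues_antitone hn (not_lt.mp hk)) 2) (by positivity)

theorem IsSymmetric.eigenvalues_le_of_re_inner_le_norm_mul_norm (hT : T.IsSymmetric)
    (hS : S.IsPositive) (hn : finrank 𝕜 E = n) (h : ∀ x, re ⟪T x, x⟫_𝕜 ≤ ‖S x‖ * ‖x‖)
    (i : Fin n) : hT.eigenvalues hn i ≤ hS.isSymmetric.eigenvalues hn i := by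
  obtain ⟨x, hx0, hTx, hSx⟩ := (hT.eigenvectorBasis hn).toBasis.exists_ne_zero_repr_eq_zero
    (hS.isSymmetric.eigenvectorBasis hn).toBasis i
  simp only [OrthonormalBasis.coe_toBasis_repr_apply] at hTx hSx
  refine le_of_mul_le_mul_right ?_ (by positivity : 0 < ‖x‖ ^ 2)
  calc hT.eigenvalues hn i * ‖x‖ ^ 2 ≤ re ⟪T x, x⟫_𝕜 :=
        hT.eigenvalues_mul_norm_sq_le_re_inner hn hTx
    _ ≤ ‖S x‖ * ‖x‖ := h x
    _ ≤ hS.isSymmetric.eigenvalues hn i * ‖x‖ * ‖x‖ := by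
      gcongr
      exact hS.norm_apply_le_eigenvalues_mul_norm hn hSx
    _ = hS.isSymmetric.eigenvalues hn i * ‖x‖ ^ 2 := by ring

theorem IsSymmetric.exists_le_linearIsometryEquiv_conj (hT : T.IsSymmetric) (hS : S.IsSymmetric)
    (hn : finrank 𝕜 E = n) (h : ∀ i, hT.eigenvalues hn i ≤ hS.eigenvalues hn i) :
    ∃ U : E ≃ₗᵢ[𝕜] E, T ≤ U.toLinearMap ∘ₗ S ∘ₗ U.symm.toLinearMap := by
  set bT := hT.eigenvectorBasis hn
  set bS := hS.eigenvectorBasis hn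
  set U := bS.repr.trans bT.repr.symm
  refine ⟨U, ((isSymmetric_linearIsometryEquiv_conj_iff S U).mpr hS).sub hT, fun x => ?_⟩
  have hrepr : bS.repr (U.symm x) = bT.repr x := by simp [U]
  have hconj : re ⟪(U.toLinearMap ∘ₗ S ∘ₗ U.symm.toLinearMap) x, x⟫_𝕜
      = re ⟪S (U.symm x), U.symm x⟫_𝕜 := by
    simp [LinearIsometryEquiv.inner_map_eq_flip]
  rw [sub_apply, inner_sub_left, map_sub, hconj, hS.re_inner_apply_self_eq_sum hn, hrepr,
    hT.re_inner_apply_self_eq_sum hn, sub_nonneg]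
  exact Finset.sum_le_sum fun k _ => by gcongr; exact h k

theorem exists_linearIsometryEquiv_apply_eq_of_norm_eq {V : Type*} [AddCommGroup V] [Module 𝕜 V]
    {f g : V →ₗ[𝕜] E} (h : ∀ x, ‖f x‖ = ‖g x‖) : ∃ U : E ≃ₗᵢ[𝕜] E, ∀ x, U (g x) = f x := by
  have hker : ker g ≤ ker f := fun x hx => by
    rw [mem_ker, ← norm_eq_zero, h, norm_eq_zero, ← mem_ker]
    exact hx
  let L₀ : range g →ₗ[𝕜] E := (ker g).liftQ f hker ∘ₗ g.quotKerEquivRange.symm.toLinearMap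
  have hL₀ (x : V) : L₀ ⟨g x, mem_range_self g x⟩ = f x := by
    simp [L₀, quotKerEquivRange_symm_apply_image]
  let L : range g →ₗᵢ[𝕜] E := ⟨L₀, by rintro ⟨_, x, rfl⟩; simp [hL₀, h]⟩
  exact ⟨L.extend.toLinearIsometryEquiv rfl, fun x =>
    (L.extend_apply ⟨g x, mem_range_self g x⟩).trans (hL₀ x)⟩

end LinearMap

lemma CFC.abs_unitary_mul {A : Type*} [CStarAlgebra A] [PartialOrder A] [StarOrderedRing A]
    {u : A} (hu : u ∈ unitary A) (a : A) : CFC.abs (u * a) = CFC.abs a := by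
  rw [CFC.abs, CFC.abs, star_mul, mul_assoc, ← mul_assoc (star u), Unitary.star_mul_self_of_mem hu,
    one_mul]

namespace ContinuousLinearMap

variable {H : Type*} [NormedAddCommGroup H] [InnerProductSpace ℂ H]

lemma re_inner_realPart_apply [CompleteSpace H] (a : H →L[ℂ] H) (x : H) :
    re ⟪(ℜ a : H →L[ℂ] H) x, x⟫_ℂ = re ⟪a x, x⟫_ℂ := by
  rw [realPart_apply_coe, star_eq_adjoint, _root_.smul_apply, _root_.add_apply,
    real_smul_eq_coe_smul (K := ℂ), inner_smul_real_left, inner_add_left, adjoint_inner_left,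
    ← inner_conj_symm x (a x), smul_re, map_add, conj_re]
  ring

lemma norm_cfcAbs_apply [CompleteSpace H] (a : H →L[ℂ] H) (x : H) : ‖CFC.abs a x‖ = ‖a x‖ := by
  have hsa : adjoint (CFC.abs a : H →L[ℂ] H) = CFC.abs a := (CFC.abs_nonneg a).isSelfAdjoint
  rw [← sq_eq_sq₀ (norm_nonneg _) (norm_nonneg _), apply_norm_sq_eq_inner_adjoint_left,
    apply_norm_sq_eq_inner_adjoint_left, hsa, ← mul_def, ← mul_def, CFC.abs_mul_abs,
    star_eq_adjoint]

lemma re_inner_realPart_apply_le [CompleteSpace H] (a : H →L[ℂ] H) (x : H) :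
    re ⟪(ℜ a : H →L[ℂ] H) x, x⟫_ℂ ≤ ‖CFC.abs a x‖ * ‖x‖ := by
  rw [re_inner_realPart_apply, norm_cfcAbs_apply]
  exact re_inner_le_norm _ _

variable [FiniteDimensional ℂ H]

theorem exists_unitary_eq_mul_cfcAbs (a : H →L[ℂ] H) :
    ∃ u ∈ unitary (H →L[ℂ] H), a = u * CFC.abs a := by
  obtain ⟨U, hU⟩ := LinearMap.exists_linearIsometryEquiv_apply_eq_of_norm_eq
    (f := (a : H →ₗ[ℂ] H)) (g := (CFC.abs a : H →L[ℂ] H)) fun x => (norm_cfcAbs_apply a x).symm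
  exact ⟨_, (Unitary.linearIsometryEquiv.symm U).2, ext fun x => (hU x).symm⟩

theorem exists_unitary_realPart_le (a : H →L[ℂ] H) :
    ∃ u ∈ unitary (H →L[ℂ] H), (ℜ a : H →L[ℂ] H) ≤ u * CFC.abs a * star u := by
  have hT : ((ℜ a : H →L[ℂ] H) : H →ₗ[ℂ] H).IsSymmetric := (ℜ a).2.isSymmetric
  have hS : ((CFC.abs a : H →L[ℂ] H) : H →ₗ[ℂ] H).IsPositive :=
    ((nonneg_iff_isPositive _).mp (CFC.abs_nonneg a)).toLinearMap
  obtain ⟨U, hU⟩ := hT.exists_le_linearIsometryEquiv_conj hS.isSymmetric rfl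
    (hT.eigenvalues_le_of_re_inner_le_norm_mul_norm hS rfl (re_inner_realPart_apply_le a))
  refine ⟨_, (Unitary.linearIsometryEquiv.symm U).2, ?_⟩
  rw [LinearMap.le_def] at hU
  rw [le_def, ← isPositive_toLinearMap_iff]
  convert hU using 2
  ext x
  simp [star_eq_adjoint, LinearIsometryEquiv.adjoint_eq_symm]

theorem exists_unitary_cfcAbs_add_le (a b : H →L[ℂ] H) :
    ∃ u ∈ unitary (H →L[ℂ] H), ∃ v ∈ unitary (H →L[ℂ] H),
      CFC.abs (a + b) ≤ u * CFC.abs a * star u + v * CFC.abs b * star v := by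
  obtain ⟨w, hw, hpolar⟩ := exists_unitary_eq_mul_cfcAbs (a + b)
  obtain ⟨u, hu, hua⟩ := exists_unitary_realPart_le (star w * a)
  obtain ⟨v, hv, hvb⟩ := exists_unitary_realPart_le (star w * b)
  rw [CFC.abs_unitary_mul (Unitary.star_mem hw)] at hua hvb
  have habs : star w * (a + b) = CFC.abs (a + b) := by
    conv_lhs => rw [hpolar]
    rw [← mul_assoc, Unitary.star_mul_self_of_mem hw, one_mul]
  have hsplit : CFC.abs (a + b) = (ℜ (star w * a) : H →L[ℂ] H) + ℜ (star w * b) := by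
    rw [← AddSubgroup.coe_add, ← map_add, ← mul_add, habs,
      (CFC.abs_nonneg _).isSelfAdjoint.coe_realPart]
  exact ⟨u, hu, v, hv, hsplit ▸ add_le_add hua hvb⟩

end ContinuousLinearMap

section MatrixTransport

open scoped MatrixOrder

lemma Matrix.PosSemidef.sqrt_eq_cfcSqrt {n 𝕜 : Type*} [Fintype n] [DecidableEq n] [RCLike 𝕜]
    {A : Matrix n n 𝕜} (hA : A.PosSemidef) : hA.sqrt = CFC.sqrt A := by
  rw [CFC.sqrt_eq_cfc, cfc_nnreal_eq_real _ A hA.nonneg, hA.1.cfc_eq]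
  simp [Matrix.PosSemidef.sqrt, IsHermitian.cfc, Function.comp_def,
    fun x => max_eq_left (hA.eigenvalues_nonneg x)]

lemma Matrix.toEuclideanCLM_cfcAbs {ι : Type*} [Fintype ι] [DecidableEq ι] (M : Matrix ι ι ℂ) :
    toEuclideanCLM (𝕜 := ℂ) (n := ι) (CFC.abs M) =
      CFC.abs (A := EuclideanSpace ℂ ι →L[ℂ] EuclideanSpace ℂ ι)
        (toEuclideanCLM (𝕜 := ℂ) (n := ι) M) := by
  refine (CFC.sqrt_unique (A := EuclideanSpace ℂ ι →L[ℂ] EuclideanSpace ℂ ι) ?_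
    (map_nonneg _ (CFC.abs_nonneg M))).symm
  rw [← map_mul, CFC.abs_mul_abs, map_mul, map_star]

lemma toEuclideanCLM_matAbs {n : ℕ} (A : Mat n) :
    toEuclideanCLM (𝕜 := ℂ) (n := Fin n) (matAbs A) =
      CFC.abs (A := EuclideanSpace ℂ (Fin n) →L[ℂ] EuclideanSpace ℂ (Fin n))
        (toEuclideanCLM (𝕜 := ℂ) (n := Fin n) A) := by
  rw [matAbs, (posSemidef_conjTranspose_mul_self A).sqrt_eq_cfcSqrt]
  exact toEuclideanCLM_cfcAbs A

lemma loewnerLE_iff_toEuclideanCLM_le {n : ℕ} (A B : Mat n) :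
    loewnerLE A B ↔
      toEuclideanCLM (𝕜 := ℂ) (n := Fin n) A ≤ toEuclideanCLM (𝕜 := ℂ) (n := Fin n) B :=
  Matrix.le_iff.symm.trans (map_le_map_iff _).symm

end MatrixTransport

theorem stmt2 {n : ℕ} (X Y : Mat n) :
    ∃ V W : Matrix.unitaryGroup (Fin n) ℂ,
      loewnerLE (matAbs (X + Y))
        ((V : Mat n) * matAbs X * (V : Mat n)ᴴ + (W : Mat n) * matAbs Y * (W : Mat n)ᴴ) := by
  obtain ⟨u, hu, v, hv, h⟩ := ContinuousLinearMap.exists_unitary_cfcAbs_add_le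
    (H := EuclideanSpace ℂ (Fin n)) (toEuclideanCLM (𝕜 := ℂ) X) (toEuclideanCLM (𝕜 := ℂ) Y)
  set φ := (toEuclideanCLM (𝕜 := ℂ) (n := Fin n)).symm.toStarAlgHom
  refine ⟨⟨φ u, Unitary.map_mem φ hu⟩, ⟨φ v, Unitary.map_mem φ hv⟩, ?_⟩
  rw [loewnerLE_iff_toEuclideanCLM_le]
  simpa [φ, toEuclideanCLM_matAbs, ← star_eq_conjTranspose, map_star] using h

end
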